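/- Let G be a finite simple graph with vertex set V, let a ≥ 0 be an integer, let S₀ ⊆ V be such that G[S₀] is connected with diameter D₀ in G[S₀], let B := {v ∈ V : dist_G(v, S₀) ≤ a}, and let S ⊇ B be a vertex set. Then any shortest path P in G[S] between two vertices of S contains at most D₀ + 2a + 1 vertices of B. -/

import Mathlib

open Finset

/-!
Every vertex on a shortest `G`-path from `v ∈ B` to a point `w ∈ S₀` with `dist_G(v, w) ≤ a`
is itself within `a` of `w`, hence in `B ⊆ S`; so in `G[S]` every vertex of `B` is within `a`
of `S₀`, and any two vertices of `B` are within `a + D₀ + a` of each other. Along a shortest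
walk the `i`-th and `j`-th vertices are at distance exactly `j - i`, so the positions of the
`B`-vertices on `p` lie in an interval of length `D₀ + 2a`.
-/
/-- The subgraph of `G` induced by the vertex set `S`, viewed as a graph on all of `V`
(vertices outside `S` are isolated). Distances between vertices of `S` in this graph agree
with distances in the induced subgraph `G[S]`. -/
def SimpleGraph.restrictS {V : Type*} (G : SimpleGraph V) (S : Set V) : SimpleGraph V where
  Adj u v := u ∈ S ∧ v ∈ S ∧ G.Adj u v
  symm := ⟨fun _ _ ⟨hu, hv, h⟩ => ⟨hv, hu, h.symm⟩⟩
  loopless := ⟨fun u ⟨_, _, h⟩ => G.ne_of_adj h rfl⟩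

lemma Finset.card_le_add_one_of_forall_le_add {s : Finset ℕ} {k : ℕ}
    (h : ∀ i ∈ s, ∀ j ∈ s, j ≤ i + k) : #s ≤ k + 1 := by
  rcases s.eq_empty_or_nonempty with rfl | hs
  · simp
  calc #s ≤ #(Icc (s.min' hs) (s.min' hs + k)) :=
        card_le_card fun j hj => mem_Icc.2 ⟨s.min'_le j hj, h _ (s.min'_mem hs) j hj⟩
    _ = k + 1 := by rw [Nat.card_Icc]; omega

namespace SimpleGraph

variable {V : Type*} {G : SimpleGraph V}

lemma restrictS_mono {S T : Set V} (h : S ⊆ T) : G.restrictS S ≤ G.restrictS T :=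
  fun _ _ ⟨hx, hy, hxy⟩ ↦ ⟨h hx, h hy, hxy⟩

lemma edist_restrictS_le_edist {S : Set V} {v w : V}
    (hS : ∀ z, G.edist z w ≤ G.edist v w → z ∈ S) :
    (G.restrictS S).edist v w ≤ G.edist v w := by
  classical
  rcases eq_or_ne (G.edist v w) ⊤ with htop | htop
  · simp [htop]
  obtain ⟨p, hp⟩ := exists_walk_of_edist_ne_top htop
  have hsupp : ∀ z ∈ p.support, z ∈ S := fun z hz =>
    hS z <| hp ▸ (p.dropUntil z hz).edist_le.trans
      (by exact_mod_cast p.length_dropUntil_le_length hz)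
  have hedges : ∀ e ∈ p.edges, e ∈ (G.restrictS S).edgeSet := by
    rintro ⟨t, u⟩ he
    exact ⟨hsupp t (p.fst_mem_support_of_mem_edges he),
      hsupp u (p.snd_mem_support_of_mem_edges he), p.edges_subset_edgeSet he⟩
  calc (G.restrictS S).edist v w ≤ (p.transfer _ hedges).length := Walk.edist_le _
    _ = G.edist v w := by rw [Walk.length_transfer, hp]

lemma edist_le_add_add {u v w z : V} {a b c : ℕ∞} (huv : G.edist u v ≤ a)
    (hvw : G.edist v w ≤ b) (hwz : G.edist w z ≤ c) : G.edist u z ≤ a + b + c :=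
  calc G.edist u z ≤ G.edist u v + G.edist v z := SimpleGraph.edist_triangle
    _ ≤ a + (b + c) := add_le_add huv (SimpleGraph.edist_triangle.trans (add_le_add hvw hwz))
    _ = a + b + c := (add_assoc ..).symm

lemma dist_le_of_edist_le {u v : V} {k : ℕ} (h : G.edist u v ≤ k) : G.dist u v ≤ k :=
  ENat.toNat_le_of_le_natCast h

namespace Walk

lemma support_eq_map_getVert {x y : V} (p : G.Walk x y) :
    p.support = (List.range (p.length + 1)).map p.getVert := by
  refine List.ext_getElem (by simp) fun n h₁ _ => ?_
  simp [p.getVert_eq_support_getElem (show n ≤ p.length by simpa using h₁)]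

lemma dist_getVert_of_length_eq_dist {x y : V} {p : G.Walk x y} (hp : p.length = G.dist x y)
    {i j : ℕ} (hij : i ≤ j) (hj : j ≤ p.length) :
    G.dist (p.getVert i) (p.getVert j) = j - i := by
  have hend : (p.drop i).getVert (j - i) = p.getVert j := by
    rw [drop_getVert, Nat.add_sub_cancel' hij]
  have hlen := length_eq_dist_of_subwalk hp
    (((p.drop i).isSubwalk_take (j - i)).trans (p.isSubwalk_drop i))
  rw [take_length, drop_length] at hlen
  rw [← hend, ← hlen]
  omega

lemma length_filter_support_le_of_length_eq_dist {x y : V} {p : G.Walk x y}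
    (hp : p.length = G.dist x y) (P : V → Prop) [DecidablePred P] {k : ℕ}
    (hP : ∀ u v, P u → P v → G.dist u v ≤ k) :
    (p.support.filter (fun z => P z)).length ≤ k + 1 := by
  have hcount : (p.support.filter (fun z => P z)).length =
      #{i ∈ range (p.length + 1) | P (p.getVert i)} := by
    rw [support_eq_map_getVert, List.filter_map, List.length_map,
      ← Nat.count_eq_card_filter_range, Nat.count, List.countP_eq_length_filter]
    rfl
  rw [hcount]
  refine Finset.card_le_add_one_of_forall_le_add fun i hi j hj => ?_
  simp only [mem_filter, mem_range] at hi hj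
  rcases le_total i j with hij | hji
  · have hdist := dist_getVert_of_length_eq_dist hp hij (by omega)
    have hle := hP _ _ hi.2 hj.2
    omega
  · omega

end Walk

end SimpleGraph

theorem shortest_path_few_vertices_near_connected_set_general
    {V : Type*} [DecidableEq V] (G : SimpleGraph V)
    (a : ℕ) (S₀ : Set V)
    (D₀ : ℕ) (hD₀ : ∀ u ∈ S₀, ∀ v ∈ S₀, (G.restrictS S₀).edist u v ≤ (D₀ : ℕ∞))
    (B : Finset V) (hB : ∀ v, v ∈ B ↔ ∃ w ∈ S₀, G.edist v w ≤ (a : ℕ∞))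
    (S : Set V) (hBS : ↑B ⊆ S)
    (x y : V)
    (p : (G.restrictS S).Walk x y)
    (hshortest : p.length = (G.restrictS S).dist x y) :
    (p.support.filter (fun z => z ∈ B)).length ≤ D₀ + 2 * a + 1 := by
  have hS₀S : S₀ ⊆ S := fun w hw => hBS <| (hB w).2 ⟨w, hw, by simp⟩
  have hnear : ∀ u ∈ B, ∃ w ∈ S₀, (G.restrictS S).edist u w ≤ a := by
    intro u hu
    obtain ⟨w, hw, hua⟩ := (hB u).1 hu
    have hball : ∀ z, G.edist z w ≤ G.edist u w → z ∈ S := fun z hz =>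
      hBS <| (hB z).2 ⟨w, hw, hz.trans hua⟩
    exact ⟨w, hw, (SimpleGraph.edist_restrictS_le_edist hball).trans hua⟩
  refine p.length_filter_support_le_of_length_eq_dist hshortest (· ∈ B) fun u v hu hv => ?_
  obtain ⟨u', hu', huu'⟩ := hnear u hu
  obtain ⟨v', hv', hvv'⟩ := hnear v hv
  have hu'v' : (G.restrictS S).edist u' v' ≤ D₀ :=
    (SimpleGraph.edist_anti (SimpleGraph.restrictS_mono hS₀S)).trans (hD₀ u' hu' v' hv')
  rw [SimpleGraph.edist_comm] at hvv'
  refine SimpleGraph.dist_le_of_edist_le ?_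
  calc (G.restrictS S).edist u v ≤ a + D₀ + a := SimpleGraph.edist_le_add_add huu' hu'v' hvv'
    _ = (D₀ + 2 * a : ℕ) := by push_cast; ring

/-- Let `a ≥ 0`, let `S₀ ⊆ V` induce a connected subgraph of diameter at
most `D₀`, let `B := {v : dist_G(v, S₀) ≤ a}`, and let `S ⊇ B`. Then any shortest path `P`
in `G[S]` between two vertices of `S` contains at most `D₀ + 2a + 1` vertices of `B`. -/
theorem shortest_path_few_vertices_near_connected_set
    {V : Type*} [Fintype V] [DecidableEq V] (G : SimpleGraph V)
    (a : ℕ) (S₀ : Set V) (hS₀ne : S₀.Nonempty)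
    (hS₀conn : ∀ u ∈ S₀, ∀ v ∈ S₀, (G.restrictS S₀).Reachable u v)
    (D₀ : ℕ) (hD₀ : ∀ u ∈ S₀, ∀ v ∈ S₀, (G.restrictS S₀).edist u v ≤ (D₀ : ℕ∞))
    (B : Finset V) (hB : ∀ v, v ∈ B ↔ ∃ w ∈ S₀, G.edist v w ≤ (a : ℕ∞))
    (S : Set V) (hBS : ↑B ⊆ S)
    (x y : V) (hx : x ∈ S) (hy : y ∈ S)
    (p : (G.restrictS S).Walk x y) (hpath : p.IsPath)
    (hshortest : p.length = (G.restrictS S).dist x y) :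
    (p.support.filter (fun z => z ∈ B)).length ≤ D₀ + 2 * a + 1 :=
  shortest_path_few_vertices_near_connected_set_general G a S₀ D₀ hD₀ B hB S hBS x y p hshortest
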